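/- Let S be a nonempty set equipped with an associative and commutative Mal'cev operation t. Then there exists a commutative group structure (multiplication, inverse, and unit) on S such that t(x, r, y) = x * r⁻¹ * y for all x, r, y ∈ S. -/

import Mathlib

/-!
Fix any base point `e`. Then `x * y := t x e y` is associative with unit `e` and inverse
`x⁻¹ := t e x e`, by the Mal'cev identities and associativity of `t`; commutativity of `t`
makes it commutative. Associativity of `t` then rewrites `x * r⁻¹ * y = t (t x e (t e r e)) e y`
back to `t x r y`.
-/

namespace MalcevOperation

variable {S : Type*} {t : S → S → S → S}

abbrev toGroup (hl : ∀ x y : S, t x x y = y) (hr : ∀ x y : S, t x y y = x)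
    (hassoc : ∀ x r y s z : S, t x r (t y s z) = t (t x r y) s z) (e : S) : Group S where
  mul x y := t x e y
  one := e
  inv x := t e x e
  mul_assoc x y z := (hassoc x e y e z).symm
  one_mul := hl e
  mul_one x := hr x e
  inv_mul_cancel x := by
    change t (t e x e) e x = e
    rw [← hassoc, hl, hr]

theorem eq_mul_inv_mul (hl : ∀ x y : S, t x x y = y) (hr : ∀ x y : S, t x y y = x)
    (hassoc : ∀ x r y s z : S, t x r (t y s z) = t (t x r y) s z) (e x r y : S) :
    t x r y = (letI := toGroup hl hr hassoc e; x * r⁻¹ * y) := by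
  change t x r y = t (t x e (t e r e)) e y
  rw [hassoc x e e r e, hr, ← hassoc, hl]

abbrev toCommGroup (hl : ∀ x y : S, t x x y = y) (hr : ∀ x y : S, t x y y = x)
    (hassoc : ∀ x r y s z : S, t x r (t y s z) = t (t x r y) s z)
    (hcomm : ∀ x r y : S, t x r y = t y r x) (e : S) : CommGroup S where
  __ := toGroup hl hr hassoc e
  mul_comm x y := hcomm x e y

end MalcevOperation

/-- A nonempty set with an associative and commutative Mal'cev operation `t`
admits a commutative group structure such that `t(x, r, y) = x * r⁻¹ * y`. -/
theorem abelian_heap_is_comm_group {S : Type*} [Nonempty S] (t : S → S → S → S)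
    (hl : ∀ x y : S, t x x y = y) (hr : ∀ x y : S, t x y y = x)
    (hassoc : ∀ x r y s z : S, t x r (t y s z) = t (t x r y) s z)
    (hcomm : ∀ x r y : S, t x r y = t y r x) :
    ∃ inst : CommGroup S, ∀ x r y : S, t x r y =
      (letI := inst; x * r⁻¹ * y) := by
  obtain ⟨e⟩ := ‹Nonempty S›
  exact ⟨MalcevOperation.toCommGroup hl hr hassoc hcomm e,
    MalcevOperation.eq_mul_inv_mul hl hr hassoc e⟩
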